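/- Every M-step two-sided shift space Γ ⊆ Σ_A^Z (i.e. Γ = X_F for some F ⊆ A^{M+1}) is topologically conjugate to the edge shift Λ(G) of some directed graph G (with no sources or sinks), via a shift-commuting homeomorphism. -/

import Mathlib

open Set Topology Filter TopologicalSpace

universe u

/-- The two-sided full shift over `A`: sequences over `A ∪ {ø}` (with `ø = none`)
in which the empty letter propagates to the right. -/
def SigmaZ (A : Type u) : Type u :=
  {x : ℤ → Option A // ∀ i, x i = none → x (i + 1) = none}

namespace SigmaZ

variable {A : Type u}

/-- The generalized cylinder `Z(x, F)`, where the finite nonempty sequence `x` is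
encoded by its length `k` and its letters `w i` for `i ≤ k`. -/
def cyl (k : ℤ) (w : ℤ → A) (F : Finset A) : Set (SigmaZ A) :=
  {y | (∀ i ≤ k, y.1 i = some (w i)) ∧ ∀ a ∈ F, y.1 (k + 1) ≠ some a}

/-- Generalized cylinders together with complements of finite unions of cylinders `Z(x)`. -/
def basicSets (A : Type u) : Set (Set (SigmaZ A)) :=
  {s | (∃ (k : ℤ) (w : ℤ → A) (F : Finset A), s = cyl k w F) ∨
    ∃ (n : ℕ) (ks : Fin n → ℤ) (ws : Fin n → ℤ → A),
      s = (⋃ j, cyl (ks j) (ws j) ∅)ᶜ}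

instance : TopologicalSpace (SigmaZ A) :=
  TopologicalSpace.generateFrom (basicSets A)

/-- The empty sequence `Ø`. -/
def emptySeq (A : Type u) : SigmaZ A := ⟨fun _ => none, fun _ _ => rfl⟩

/-- The shift map. -/
def shift (x : SigmaZ A) : SigmaZ A :=
  ⟨fun i => x.1 (i + 1), fun i h => x.2 (i + 1) h⟩

end SigmaZ

namespace SigmaZ

variable {A : Type u}

/-- A two-sided shift space: a closed, shift-invariant subset in which the
infinite sequences (those with no empty letter) are dense. -/
def IsShiftSpace (Lam : Set (SigmaZ A)) : Prop :=
  IsClosed Lam ∧ shift '' Lam = Lam ∧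
    Lam ⊆ closure {x ∈ Lam | ∀ i, x.1 i ≠ none}

end SigmaZ

namespace SigmaZ

variable {A : Type u}

/-- The finite word `w` (nonempty) occurs as a subblock of `x`. -/
def OccursWord (w : List A) (x : SigmaZ A) : Prop :=
  ∃ k : ℤ, ∀ n : ℕ, n < w.length → x.1 (k + n) = w[n]?

/-- The left-infinite word `(a_i)_{i ≤ 0}`, encoded by `u : ℕ → A` with `u n = a_{-n}`,
occurs as a left-infinite subword of `x`. -/
def OccursLinf (u : ℕ → A) (x : SigmaZ A) : Prop :=
  ∃ k : ℤ, ∀ n : ℕ, x.1 (k - n) = some (u n)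

/-- The infinite sequences avoiding all forbidden finite words (in `Fw`) and all
forbidden left-infinite words (in `Fl`). -/
def XFinf (Fw : Set (List A)) (Fl : Set (ℕ → A)) : Set (SigmaZ A) :=
  {x | (∀ i, x.1 i ≠ none) ∧ (∀ w ∈ Fw, ¬ OccursWord w x) ∧ ∀ u ∈ Fl, ¬ OccursLinf u x}

/-- The set of letters `a` such that the left-infinite word `x·a` (where `x` has
length `l`) occurs as a left-infinite subword of some element of `Y`. -/
def followerLetters (Y : Set (SigmaZ A)) (x : SigmaZ A) (l : ℤ) : Set A :=
  {a | ∃ y ∈ Y, ∃ m : ℤ, y.1 m = some a ∧ ∀ i < (0 : ℤ), y.1 (m + i) = x.1 (l + 1 + i)}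

open Classical in
/-- The shift space `X_F` determined by the forbidden words `F = Fw ∪ Fl`. -/
def XF (Fw : Set (List A)) (Fl : Set (ℕ → A)) : Set (SigmaZ A) :=
  XFinf Fw Fl ∪
    (if (XFinf Fw Fl).Infinite then
      {emptySeq A} ∪ {x | ∃ l : ℤ, x.1 l ≠ none ∧ x.1 (l + 1) = none ∧
        (followerLetters (XFinf Fw Fl) x l).Infinite}
    else ∅)

end SigmaZ

namespace SigmaZ

section Aux

variable {B : Type u}

theorem none_mono (x : SigmaZ B) {i j : ℤ} (h : x.1 i = none) (hij : i ≤ j) : x.1 j = none := by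
  have H : ∀ n : ℤ, i ≤ n → x.1 n = none := by
    intro n hn
    refine Int.le_induction (motive := fun n _ => x.1 n = none) ?_ ?_ n hn
    · exact h
    · intro n _ ih
      exact x.2 n ih
  exact H j hij

theorem some_of_le (x : SigmaZ B) {i j : ℤ} (h : x.1 j ≠ none) (hij : i ≤ j) : x.1 i ≠ none :=
  fun hi => h (none_mono x hi hij)

def transl (d : ℤ) (x : SigmaZ B) : SigmaZ B :=
  ⟨fun i => x.1 (i + d), fun i h => by
    have := x.2 (i + d) h
    rwa [show i + d + 1 = i + 1 + d by ring] at this⟩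

@[simp] theorem transl_apply (d : ℤ) (x : SigmaZ B) (i : ℤ) :
    (transl d x).1 i = x.1 (i + d) := rfl

def getl (x : SigmaZ B) (j : ℤ) (h : x.1 j ≠ none) : B :=
  (x.1 j).get (Option.ne_none_iff_isSome.mp h)

theorem getl_spec (x : SigmaZ B) (j : ℤ) (h : x.1 j ≠ none) : x.1 j = some (getl x j h) :=
  (Option.some_get _).symm

theorem getl_eq (x : SigmaZ B) {j : ℤ} {a : B} (h : x.1 j ≠ none) (ha : x.1 j = some a) :
    getl x j h = a := by
  have := getl_spec x j h
  rw [ha] at this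
  exact (Option.some_injective _ this).symm

theorem exists_end (y : SigmaZ B) {i₀ i₁ : ℤ} (h0 : y.1 i₀ ≠ none) (h1 : y.1 i₁ = none) :
    ∃ L, y.1 L ≠ none ∧ y.1 (L + 1) = none := by
  classical
  have hlt : i₀ < i₁ := by
    by_contra h
    exact h0 (none_mono y h1 (by omega))
  have hex : ∃ n : ℕ, y.1 (i₀ + (n : ℤ)) = none :=
    ⟨(i₁ - i₀).toNat, by rw [show i₀ + (((i₁ - i₀).toNat : ℕ) : ℤ) = i₁ by omega]; exact h1⟩
  set n₀ := Nat.find hex with hn₀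
  have hpos : 0 < n₀ := by
    rcases Nat.eq_zero_or_pos n₀ with h | h
    · exfalso
      have := Nat.find_spec hex
      rw [← hn₀, h] at this
      simp at this
      exact h0 this
    · exact h
  refine ⟨i₀ + (n₀ : ℤ) - 1, ?_, ?_⟩
  · have := Nat.find_min hex (show n₀ - 1 < n₀ by omega)
    rwa [show i₀ + ((n₀ - 1 : ℕ) : ℤ) = i₀ + (n₀ : ℤ) - 1 by omega] at this
  · have := Nat.find_spec hex
    rwa [show i₀ + (n₀ : ℤ) - 1 + 1 = i₀ + (n₀ : ℤ) by ring]

theorem cyl_open (k : ℤ) (w : ℤ → B) (F : Finset B) : IsOpen (cyl k w F) :=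
  TopologicalSpace.GenerateOpen.basic _ (Or.inl ⟨k, w, F, rfl⟩)

theorem cyl_compl_open (k : ℤ) (w : ℤ → B) : IsOpen (cyl k w (∅ : Finset B))ᶜ :=
  TopologicalSpace.GenerateOpen.basic _ (Or.inr ⟨1, fun _ => k, fun _ => w, by
    rw [Set.iUnion_const]⟩)

theorem basis_B (B : Type u) :
    IsTopologicalBasis ((fun f => Set.sInter f) ''
      {f : Set (Set (SigmaZ B)) | f.Finite ∧ f ⊆ basicSets B}) :=
  isTopologicalBasis_of_subbasis rfl

end Aux


section Aux2

variable {A : Type u} (Fw : Set (List A)) (M : ℕ)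

theorem transl_mem_X (d : ℤ) {x : SigmaZ A} (hx : x ∈ XFinf Fw (∅ : Set (ℕ → A))) :
    transl d x ∈ XFinf Fw (∅ : Set (ℕ → A)) := by
  obtain ⟨h1, h2, _⟩ := hx
  refine ⟨fun i => h1 (i + d), fun w hw hocc => h2 w hw ?_, fun u hu => absurd hu (Set.notMem_empty u)⟩
  obtain ⟨k, hk⟩ := hocc
  refine ⟨k + d, fun n hn => ?_⟩
  have := hk n hn
  rw [transl_apply] at this
  rwa [show k + d + (n : ℤ) = k + (n : ℤ) + d by ring]

theorem mem_XF_of_X {x : SigmaZ A} (hx : x ∈ XFinf Fw (∅ : Set (ℕ → A))) :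
    x ∈ XF Fw (∅ : Set (ℕ → A)) := by
  unfold XF
  exact Set.mem_union_left _ hx

theorem mem_XF_iff {x : SigmaZ A} : x ∈ XF Fw (∅ : Set (ℕ → A)) ↔
    x ∈ XFinf Fw (∅ : Set (ℕ → A)) ∨ ((XFinf Fw (∅ : Set (ℕ → A))).Infinite ∧
      (x = emptySeq A ∨ ∃ l : ℤ, x.1 l ≠ none ∧ x.1 (l + 1) = none ∧
        (followerLetters (XFinf Fw (∅ : Set (ℕ → A))) x l).Infinite)) := by
  unfold XF
  by_cases h : (XFinf Fw (∅ : Set (ℕ → A))).Infinite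
  · rw [if_pos h]
    simp only [Set.mem_union, Set.mem_singleton_iff, Set.mem_setOf_eq]
    tauto
  · rw [if_neg h]
    simp only [Set.union_empty]
    tauto

theorem follower_elt {x : SigmaZ A} {l : ℤ} {a : A}
    (ha : a ∈ followerLetters (XFinf Fw (∅ : Set (ℕ → A))) x l) :
    ∃ z ∈ XFinf Fw (∅ : Set (ℕ → A)), z.1 (l + 1) = some a ∧ ∀ j ≤ l, z.1 j = x.1 j := by
  obtain ⟨y, hy, m, hm1, hm2⟩ := ha
  refine ⟨transl (m - (l + 1)) y, transl_mem_X Fw _ hy, ?_, ?_⟩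
  · rw [transl_apply, show l + 1 + (m - (l + 1)) = m by ring]
    exact hm1
  · intro j hj
    have := hm2 (j - (l + 1)) (by omega)
    rw [show m + (j - (l + 1)) = j + (m - (l + 1)) by ring,
      show l + 1 + (j - (l + 1)) = j by ring] at this
    rw [transl_apply]
    exact this

theorem X_infinite_of_followers {x : SigmaZ A} {l : ℤ}
    (h : (followerLetters (XFinf Fw (∅ : Set (ℕ → A))) x l).Infinite) :
    (XFinf Fw (∅ : Set (ℕ → A))).Infinite := by
  classical
  have hsel : ∀ a : A, ∃ z, a ∈ followerLetters (XFinf Fw (∅ : Set (ℕ → A))) x l →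
      z ∈ XFinf Fw (∅ : Set (ℕ → A)) ∧ z.1 (l + 1) = some a := by
    intro a
    by_cases ha : a ∈ followerLetters (XFinf Fw (∅ : Set (ℕ → A))) x l
    · obtain ⟨z, hz, h1, _⟩ := follower_elt Fw ha
      exact ⟨z, fun _ => ⟨hz, h1⟩⟩
    · exact ⟨emptySeq A, fun hc => absurd hc ha⟩
  choose f hf using hsel
  refine Set.infinite_of_injOn_mapsTo (f := f) ?_ (fun a ha => (hf a ha).1) h
  intro a ha b hb hab
  have h1 := (hf a ha).2
  have h2 := (hf b hb).2
  rw [hab] at h1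
  rw [h1] at h2
  exact Option.some_injective _ h2

def OccB (b : Fin (M + 1) → A) : Prop :=
  ∃ x ∈ XFinf Fw (∅ : Set (ℕ → A)), ∃ k : ℤ, ∀ t : Fin (M + 1), x.1 (k + ((t : ℕ) : ℤ)) = some (b t)

def OccV (v : Fin M → A) : Prop :=
  ∃ x ∈ XFinf Fw (∅ : Set (ℕ → A)), ∃ k : ℤ, ∀ t : Fin M, x.1 (k + ((t : ℕ) : ℤ)) = some (v t)

def EdgeT : Type u := {b : Fin (M + 1) → A // OccB Fw M b}

def VertT : Type u := {v : Fin M → A // OccV Fw M v}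

def esrc (e : EdgeT Fw M) : VertT Fw M :=
  ⟨fun t => e.1 t.castSucc, by
    obtain ⟨x, hx, k, hk⟩ := e.2
    refine ⟨x, hx, k, fun t => ?_⟩
    have := hk t.castSucc
    rwa [show ((t.castSucc : ℕ) : ℤ) = ((t : ℕ) : ℤ) by simp] at this⟩

def etgt (e : EdgeT Fw M) : VertT Fw M :=
  ⟨fun t => e.1 t.succ, by
    obtain ⟨x, hx, k, hk⟩ := e.2
    refine ⟨x, hx, k + 1, fun t => ?_⟩
    have := hk t.succ
    rwa [show k + ((t.succ : ℕ) : ℤ) = k + 1 + ((t : ℕ) : ℤ) by simp [Fin.val_succ]; ring] at this⟩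

def WkS : Set (SigmaZ (EdgeT Fw M)) :=
  {y | ∀ i : ℤ, ∃ e e' : EdgeT Fw M, y.1 i = some e ∧ y.1 (i + 1) = some e' ∧
    etgt Fw M e = esrc Fw M e'}

theorem transl_WkS (d : ℤ) {z : SigmaZ (EdgeT Fw M)} (hz : z ∈ WkS Fw M) :
    transl d z ∈ WkS Fw M := by
  intro i
  obtain ⟨e, e', h1, h2, h3⟩ := hz (i + d)
  refine ⟨e, e', h1, ?_, h3⟩
  rw [transl_apply, show i + 1 + d = i + d + 1 by ring]
  exact h2

def blockOf (x : SigmaZ A) (i : ℤ) (h : ∀ t : Fin (M + 1), x.1 (i + ((t : ℕ) : ℤ)) ≠ none) :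
    Fin (M + 1) → A :=
  fun t => getl x (i + ((t : ℕ) : ℤ)) (h t)

theorem occ_blockOf {x : SigmaZ A} (hx : x ∈ XF Fw (∅ : Set (ℕ → A))) (i : ℤ)
    (h : ∀ t : Fin (M + 1), x.1 (i + ((t : ℕ) : ℤ)) ≠ none) :
    OccB Fw M (blockOf M x i h) := by
  rcases (mem_XF_iff Fw).mp hx with hX | ⟨_, hrest⟩
  · exact ⟨x, hX, i, fun t => getl_spec _ _ _⟩
  rcases hrest with rfl | ⟨l, hl1, hl2, hl3⟩
  · exact absurd rfl (h 0)
  · have hiM : i + (M : ℤ) ≤ l := by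
      by_contra hc
      exact h ⟨M, by omega⟩ (none_mono x hl2 (by simp; omega))
    obtain ⟨a, ha⟩ := hl3.nonempty
    obtain ⟨z, hz, _, hag⟩ := follower_elt Fw ha
    refine ⟨z, hz, i, fun t => ?_⟩
    rw [hag (i + ((t : ℕ) : ℤ)) (by have := t.is_le; omega)]
    exact getl_spec _ _ _

open Classical in
noncomputable def hfunAux (x : SigmaZ A) (hx : x ∈ XF Fw (∅ : Set (ℕ → A))) : ℤ → Option (EdgeT Fw M) :=
  fun i => if h : ∀ t : Fin (M + 1), x.1 (i + ((t : ℕ) : ℤ)) ≠ none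
      then some ⟨blockOf M x i h, occ_blockOf Fw M hx i h⟩ else none

theorem hfunAux_some {x : SigmaZ A} {hx : x ∈ XF Fw (∅ : Set (ℕ → A))} {i : ℤ}
    (h : ∀ t : Fin (M + 1), x.1 (i + ((t : ℕ) : ℤ)) ≠ none) :
    hfunAux Fw M x hx i = some ⟨blockOf M x i h, occ_blockOf Fw M hx i h⟩ := dif_pos h

theorem hfunAux_none {x : SigmaZ A} {hx : x ∈ XF Fw (∅ : Set (ℕ → A))} {i : ℤ}
    (h : ¬ ∀ t : Fin (M + 1), x.1 (i + ((t : ℕ) : ℤ)) ≠ none) :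
    hfunAux Fw M x hx i = none := dif_neg h

noncomputable def hfunRaw (x : SigmaZ A) (hx : x ∈ XF Fw (∅ : Set (ℕ → A))) : SigmaZ (EdgeT Fw M) := by
  refine ⟨hfunAux Fw M x hx, fun i hi => ?_⟩
  rw [hfunAux_none]
  intro hall
  by_cases hc : ∀ t : Fin (M + 1), x.1 (i + ((t : ℕ) : ℤ)) ≠ none
  · rw [hfunAux_some Fw M hc] at hi
    exact Option.some_ne_none _ hi
  · push_neg at hc
    obtain ⟨t, ht⟩ := hc
    exact hall ⟨M, by omega⟩ (none_mono x ht (by have := t.is_le; simp; omega))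

theorem hfunRaw_val {x : SigmaZ A} {hx : x ∈ XF Fw (∅ : Set (ℕ → A))} :
    (hfunRaw Fw M x hx).1 = hfunAux Fw M x hx := rfl

theorem hfun_ne_none_iff {x : SigmaZ A} {hx : x ∈ XF Fw (∅ : Set (ℕ → A))} {i : ℤ} :
    (hfunRaw Fw M x hx).1 i ≠ none ↔ ∀ t : Fin (M + 1), x.1 (i + ((t : ℕ) : ℤ)) ≠ none := by
  rw [hfunRaw_val]
  constructor
  · intro hne
    by_contra hc
    exact hne (hfunAux_none Fw M hc)
  · intro h
    rw [hfunAux_some Fw M h]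
    exact fun hc => Option.some_ne_none _ hc

theorem hfun_letters {x : SigmaZ A} {hx : x ∈ XF Fw (∅ : Set (ℕ → A))} {i : ℤ}
    {e : EdgeT Fw M} (h : (hfunRaw Fw M x hx).1 i = some e) (t : Fin (M + 1)) :
    x.1 (i + ((t : ℕ) : ℤ)) = some (e.1 t) := by
  rw [hfunRaw_val] at h
  by_cases hc : ∀ t : Fin (M + 1), x.1 (i + ((t : ℕ) : ℤ)) ≠ none
  · rw [hfunAux_some Fw M hc] at h
    have h2 := Option.some_injective _ h
    rw [← h2]
    exact getl_spec x _ (hc t)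
  · rw [hfunAux_none Fw M hc] at h
    exact (Option.some_ne_none _ h.symm).elim

theorem hfun_congr {x y : SigmaZ A} {hx : x ∈ XF Fw (∅ : Set (ℕ → A))}
    {hy : y ∈ XF Fw (∅ : Set (ℕ → A))} {i i' : ℤ}
    (h : ∀ t : Fin (M + 1), x.1 (i + ((t : ℕ) : ℤ)) = y.1 (i' + ((t : ℕ) : ℤ))) :
    (hfunRaw Fw M x hx).1 i = (hfunRaw Fw M y hy).1 i' := by
  rw [hfunRaw_val, hfunRaw_val]
  by_cases hc : ∀ t : Fin (M + 1), x.1 (i + ((t : ℕ) : ℤ)) ≠ none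
  · have hc' : ∀ t : Fin (M + 1), y.1 (i' + ((t : ℕ) : ℤ)) ≠ none := fun t => (h t) ▸ hc t
    rw [hfunAux_some Fw M hc, hfunAux_some Fw M hc']
    congr 1
    apply Subtype.ext
    funext t
    exact getl_eq x (hc t) (by rw [h t]; exact getl_spec y _ (hc' t))
  · have hc' : ¬ ∀ t : Fin (M + 1), y.1 (i' + ((t : ℕ) : ℤ)) ≠ none := by
      intro hall
      exact hc (fun t => (h t).symm ▸ hall t)
    rw [hfunAux_none Fw M hc, hfunAux_none Fw M hc']

end Aux2


section Aux3

variable {A : Type u} (Fw : Set (List A)) (M : ℕ)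

theorem exists_block_cover {x : SigmaZ A} {j : ℤ} (hj : x.1 j ≠ none) :
    ∃ i : ℤ, i ≤ j ∧ j ≤ i + M ∧ ∀ t : Fin (M + 1), x.1 (i + ((t : ℕ) : ℤ)) ≠ none := by
  classical
  by_cases hc : ∀ t : Fin (M + 1), x.1 (j + ((t : ℕ) : ℤ)) ≠ none
  · exact ⟨j, le_refl j, by omega, hc⟩
  · push_neg at hc
    obtain ⟨t₀, ht₀⟩ := hc
    have hex : ∃ n : ℕ, x.1 (j + (n : ℤ)) = none := ⟨(t₀ : ℕ), ht₀⟩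
    set n₀ := Nat.find hex with hn₀
    have hpos : 0 < n₀ := by
      rcases Nat.eq_zero_or_pos n₀ with h | h
      · exfalso
        have := Nat.find_spec hex
        rw [← hn₀, h] at this
        simp at this
        exact hj this
      · exact h
    have hle : n₀ ≤ M := le_trans (Nat.find_min' hex ht₀) t₀.is_le
    have hlast : x.1 (j + (n₀ : ℤ) - 1) ≠ none := by
      have := Nat.find_min hex (show n₀ - 1 < n₀ by omega)
      rwa [show j + ((n₀ - 1 : ℕ) : ℤ) = j + (n₀ : ℤ) - 1 by omega] at this
    refine ⟨j + (n₀ : ℤ) - 1 - M, by omega, by omega, fun t => ?_⟩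
    refine some_of_le x hlast ?_
    have := t.is_le
    omega

theorem hfun_letter_eq {x y : SigmaZ A} {hx : x ∈ XF Fw (∅ : Set (ℕ → A))}
    {hy : y ∈ XF Fw (∅ : Set (ℕ → A))} (h : hfunRaw Fw M x hx = hfunRaw Fw M y hy)
    {j : ℤ} (hj : x.1 j ≠ none) : x.1 j = y.1 j := by
  obtain ⟨i, hij, hji, hall⟩ := exists_block_cover M hj
  have h1 : (hfunRaw Fw M x hx).1 i = some ⟨blockOf M x i hall, occ_blockOf Fw M hx i hall⟩ :=
    hfunAux_some Fw M (hx := hx) hall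
  have h2 : (hfunRaw Fw M y hy).1 i = some ⟨blockOf M x i hall, occ_blockOf Fw M hx i hall⟩ := by
    rw [← h]; exact h1
  obtain ⟨t, ht⟩ : ∃ t : Fin (M + 1), j = i + ((t : ℕ) : ℤ) :=
    ⟨⟨(j - i).toNat, by omega⟩, by simp; omega⟩
  rw [ht, hfun_letters Fw M h1 t, hfun_letters Fw M h2 t]

theorem hfun_inj {x y : SigmaZ A} {hx : x ∈ XF Fw (∅ : Set (ℕ → A))}
    {hy : y ∈ XF Fw (∅ : Set (ℕ → A))} (h : hfunRaw Fw M x hx = hfunRaw Fw M y hy) : x = y := by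
  apply Subtype.ext
  funext j
  by_cases h1 : x.1 j = none
  · by_cases h2 : y.1 j = none
    · rw [h1, h2]
    · exact (hfun_letter_eq Fw M h.symm h2).symm
  · exact hfun_letter_eq Fw M h h1

def glueRaw (y : SigmaZ (EdgeT Fw M)) : SigmaZ A :=
  ⟨fun j => (y.1 j).map (fun e => e.1 0), fun j h => by
    rw [Option.map_eq_none_iff] at h ⊢
    exact y.2 j h⟩

theorem glue_some {y : SigmaZ (EdgeT Fw M)} {j : ℤ} {e : EdgeT Fw M} (h : y.1 j = some e) :
    (glueRaw Fw M y).1 j = some (e.1 0) := by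
  simp only [glueRaw, h, Option.map_some]

theorem walk_letters {z : SigmaZ (EdgeT Fw M)} (hz : z ∈ WkS Fw M) :
    ∀ (n : ℕ) (hn : n < M + 1) (i : ℤ) (e : EdgeT Fw M), z.1 i = some e →
      (glueRaw Fw M z).1 (i + (n : ℤ)) = some (e.1 ⟨n, hn⟩) := by
  intro n
  induction n with
  | zero =>
    intro hn i e he
    rw [show i + ((0 : ℕ) : ℤ) = i by simp, glue_some Fw M he]
    rfl
  | succ n ih =>
    intro hn i e he
    obtain ⟨e₁, e₂, h1, h2, h3⟩ := hz i
    rw [he] at h1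
    have he₁ : e = e₁ := Option.some_injective _ h1
    subst he₁
    have hov : e.1 ⟨n + 1, hn⟩ = e₂.1 ⟨n, by omega⟩ := by
      exact congrFun (congrArg Subtype.val h3) ⟨n, by omega⟩
    have := ih (by omega) (i + 1) e₂ h2
    rw [show i + ((n + 1 : ℕ) : ℤ) = i + 1 + (n : ℤ) by push_cast; ring, this, hov]

theorem glue_all_some {z : SigmaZ (EdgeT Fw M)} (hz : z ∈ WkS Fw M) (j : ℤ) :
    (glueRaw Fw M z).1 j ≠ none := by
  obtain ⟨e, _, h1, _, _⟩ := hz j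
  rw [glue_some Fw M h1]
  exact fun hc => Option.some_ne_none _ hc

theorem glue_mem_X (hF : ∀ w ∈ Fw, w.length = M + 1) {z : SigmaZ (EdgeT Fw M)}
    (hz : z ∈ WkS Fw M) : glueRaw Fw M z ∈ XFinf Fw (∅ : Set (ℕ → A)) := by
  refine ⟨glue_all_some Fw M hz, ?_, fun u hu => absurd hu (Set.notMem_empty u)⟩
  rintro w hw ⟨k, hk⟩
  obtain ⟨e, e', h1, _, _⟩ := hz k
  have hlen := hF w hw
  obtain ⟨x', hx', k', hk'⟩ := e.2
  refine hx'.2.1 w hw ⟨k', fun n hn => ?_⟩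
  rw [hlen] at hn
  have hwl : w[n]? = some (e.1 ⟨n, by omega⟩) := by
    have := hk n (by rw [hlen]; exact hn)
    rw [walk_letters Fw M hz n (by omega) k e h1] at this
    exact this.symm
  rw [hwl]
  have := hk' ⟨n, by omega⟩
  rwa [show k' + ((((⟨n, by omega⟩ : Fin (M + 1)) : ℕ)) : ℤ) = k' + (n : ℤ) by norm_num] at this

theorem glue_injOn {z z' : SigmaZ (EdgeT Fw M)} (hz : z ∈ WkS Fw M) (hz' : z' ∈ WkS Fw M)
    (h : glueRaw Fw M z = glueRaw Fw M z') : z = z' := by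
  apply Subtype.ext
  funext i
  obtain ⟨e, _, h1, _, _⟩ := hz i
  obtain ⟨e', _, h1', _, _⟩ := hz' i
  rw [h1, h1']
  congr 1
  apply Subtype.ext
  funext t
  have w1 := walk_letters Fw M hz (t : ℕ) t.isLt i e h1
  have w2 := walk_letters Fw M hz' (t : ℕ) t.isLt i e' h1'
  rw [h, w2] at w1
  have := Option.some_injective _ w1.symm
  simpa using this

theorem hfun_mem_Wk {x : SigmaZ A} (hx : x ∈ XFinf Fw (∅ : Set (ℕ → A))) :
    hfunRaw Fw M x (mem_XF_of_X Fw hx) ∈ WkS Fw M := by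
  intro i
  have hc : ∀ (m : ℤ) (t : Fin (M + 1)), x.1 (m + ((t : ℕ) : ℤ)) ≠ none := fun m t => hx.1 _
  have hxx : x ∈ XF Fw (∅ : Set (ℕ → A)) := mem_XF_of_X Fw hx
  refine ⟨⟨blockOf M x i (hc i), occ_blockOf Fw M hxx i (hc i)⟩,
    ⟨blockOf M x (i + 1) (hc (i + 1)), occ_blockOf Fw M hxx (i + 1) (hc (i + 1))⟩,
    hfunAux_some Fw M (hx := hxx) (hc i), hfunAux_some Fw M (hx := hxx) (hc (i + 1)), ?_⟩
  apply Subtype.ext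
  funext t
  refine getl_eq x (hc i t.succ) ?_
  rw [show i + ((t.succ : ℕ) : ℤ) = i + 1 + ((t.castSucc : ℕ) : ℤ) by simp [Fin.val_succ]; ring]
  exact getl_spec x _ (hc (i + 1) t.castSucc)

theorem hfun_emptySeq (hx : emptySeq A ∈ XF Fw (∅ : Set (ℕ → A))) :
    hfunRaw Fw M (emptySeq A) hx = emptySeq (EdgeT Fw M) := by
  apply Subtype.ext
  funext i
  rw [hfunRaw_val, hfunAux_none]
  · rfl
  · intro hall
    exact hall 0 rfl

theorem hfun_shift {x y : SigmaZ A} (hx : x ∈ XF Fw (∅ : Set (ℕ → A)))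
    (hy : y ∈ XF Fw (∅ : Set (ℕ → A))) (h : y = shift x) :
    hfunRaw Fw M y hy = shift (hfunRaw Fw M x hx) := by
  subst h
  apply Subtype.ext
  funext i
  show (hfunRaw Fw M (shift x) hy).1 i = (hfunRaw Fw M x hx).1 (i + 1)
  refine hfun_congr Fw M (fun t => ?_)
  show x.1 (i + ((t : ℕ) : ℤ) + 1) = x.1 (i + 1 + ((t : ℕ) : ℤ))
  rw [show i + ((t : ℕ) : ℤ) + 1 = i + 1 + ((t : ℕ) : ℤ) by ring]

theorem hfun_glue (hF : ∀ w ∈ Fw, w.length = M + 1) {z : SigmaZ (EdgeT Fw M)}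
    (hz : z ∈ WkS Fw M) :
    hfunRaw Fw M (glueRaw Fw M z) (mem_XF_of_X Fw (glue_mem_X Fw M hF hz)) = z := by
  apply Subtype.ext
  funext i
  obtain ⟨e, e', h1, h2, h3⟩ := hz i
  have hcond : ∀ t : Fin (M + 1), (glueRaw Fw M z).1 (i + ((t : ℕ) : ℤ)) ≠ none :=
    fun t => glue_all_some Fw M hz _
  rw [hfunRaw_val, hfunAux_some Fw M hcond, h1]
  congr 1
  apply Subtype.ext
  funext t
  refine getl_eq _ (hcond t) ?_
  have := walk_letters Fw M hz (t : ℕ) t.isLt i e h1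
  simpa using this

end Aux3


section Aux4

variable {A : Type u} (Fw : Set (List A)) (M : ℕ)

open Classical in
noncomputable def toWk (x : SigmaZ A) : SigmaZ (EdgeT Fw M) :=
  if h : x ∈ XFinf Fw (∅ : Set (ℕ → A)) then hfunRaw Fw M x (mem_XF_of_X Fw h) else emptySeq _

theorem toWk_eq {x : SigmaZ A} (h : x ∈ XFinf Fw (∅ : Set (ℕ → A))) :
    toWk Fw M x = hfunRaw Fw M x (mem_XF_of_X Fw h) := dif_pos h

theorem Wk_infinite (hinf : (XFinf Fw (∅ : Set (ℕ → A))).Infinite) : (WkS Fw M).Infinite := by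
  refine Set.infinite_of_injOn_mapsTo (f := toWk Fw M) ?_ ?_ hinf
  · intro a ha b hb hab
    rw [toWk_eq Fw M ha, toWk_eq Fw M hb] at hab
    exact hfun_inj Fw M hab
  · intro a ha
    rw [toWk_eq Fw M ha]
    exact hfun_mem_Wk Fw M ha

theorem exists_walk_avoiding (hWk : (WkS Fw M).Infinite)
    {C : Set (Set (SigmaZ (EdgeT Fw M)))} (hC : C.Finite)
    (hCc : ∀ c ∈ C, ∃ k w, c = cyl k w (∅ : Finset (EdgeT Fw M))) :
    ∃ z ∈ WkS Fw M, ∀ c ∈ C, z ∉ c := by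
  classical
  by_contra hcon
  push_neg at hcon
  obtain ⟨lst, hlst⟩ : ∃ lst : List (Set (SigmaZ (EdgeT Fw M))), ∀ c, c ∈ C ↔ c ∈ lst :=
    ⟨hC.toFinset.toList, fun c => by simp⟩
  set n := lst.length with hn
  have hdata : ∀ j : Fin n, ∃ (k : ℤ) (w : ℤ → EdgeT Fw M), lst.get j = cyl k w ∅ :=
    fun j => hCc _ ((hlst _).mpr (lst.get_mem j))
  choose ks ws hkw using hdata
  have hemb := hWk.natEmbedding
  set zz : Fin (n + 1) → SigmaZ (EdgeT Fw M) := fun s => (hemb (s : ℕ)).1 with hzz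
  have hzzW : ∀ s, zz s ∈ WkS Fw M := fun s => (hemb (s : ℕ)).2
  have hzzinj : ∀ s s' : Fin (n + 1), s ≠ s' → zz s ≠ zz s' := by
    intro s s' hne h
    apply hne
    have := hemb.injective (Subtype.ext h)
    exact Fin.ext (by exact_mod_cast this)
  have hdiff : ∀ s s' : Fin (n + 1), ∃ c : ℤ, s ≠ s' → (zz s).1 c ≠ (zz s').1 c := by
    intro s s'
    by_cases h : s = s'
    · exact ⟨0, fun hc => absurd h hc⟩
    · have hne := hzzinj s s' h
      have : ∃ c, (zz s).1 c ≠ (zz s').1 c := by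
        by_contra hc
        push_neg at hc
        exact hne (Subtype.ext (funext hc))
      obtain ⟨c, hc⟩ := this
      exact ⟨c, fun _ => hc⟩
  choose D hD using hdiff
  obtain ⟨K₀, hK₀⟩ : ∃ K₀ : ℤ, ∀ s s', D s s' ≤ K₀ := by
    obtain ⟨K₀, hK₀⟩ := (Set.finite_range (fun p : Fin (n + 1) × Fin (n + 1) => D p.1 p.2)).bddAbove
    exact ⟨K₀, fun s s' => hK₀ ⟨(s, s'), rfl⟩⟩
  rcases Nat.eq_zero_or_pos n with hn0 | hn0
  · obtain ⟨c, hc, _⟩ := hcon (zz 0) (hzzW 0)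
    have hmem := (hlst c).mp hc
    have hnil : lst = [] := List.eq_nil_of_length_eq_zero (by omega)
    rw [hnil] at hmem
    exact absurd hmem List.not_mem_nil
  obtain ⟨kmin, hkmin⟩ : ∃ km : ℤ, ∀ j : Fin n, km ≤ ks j := by
    obtain ⟨km, hkm⟩ := (Set.finite_range ks).bddBelow
    exact ⟨km, fun j => hkm ⟨j, rfl⟩⟩
  set d := K₀ - kmin with hd
  set tz : Fin (n + 1) → SigmaZ (EdgeT Fw M) := fun s => transl d (zz s) with htz
  have htzW : ∀ s, tz s ∈ WkS Fw M := fun s => transl_WkS Fw M d (hzzW s)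
  have hassign : ∀ s : Fin (n + 1), ∃ j : Fin n, tz s ∈ cyl (ks j) (ws j) ∅ := by
    intro s
    obtain ⟨c, hc, hmem⟩ := hcon (tz s) (htzW s)
    obtain ⟨j, hj⟩ := List.mem_iff_get.mp ((hlst c).mp hc)
    refine ⟨j, ?_⟩
    rw [← hkw j, hj]
    exact hmem
  choose J hJ using hassign
  obtain ⟨s, s', hne, hJeq⟩ := Fintype.exists_ne_map_eq_of_card_lt J (by simp)
  have hc1 := (hJ s).1 (D s s' - d) (by have := hK₀ s s'; have := hkmin (J s); omega)
  have hc2 := (hJ s').1 (D s s' - d) (by have := hK₀ s s'; have := hkmin (J s'); omega)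
  rw [← hJeq] at hc2
  apply hD s s' hne
  show (zz s).1 (D s s') = (zz s').1 (D s s')
  have e1 : (zz s).1 (D s s') = (tz s).1 (D s s' - d) := by
    rw [htz]
    simp only [transl_apply]
    rw [show D s s' - d + d = D s s' by ring]
  have e2 : (zz s').1 (D s s') = (tz s').1 (D s s' - d) := by
    simp only [htz, transl_apply]
    rw [show D s s' - d + d = D s s' by ring]
  rw [e1, e2, hc1, hc2]

theorem collect_cyls {f : Set (Set (SigmaZ (EdgeT Fw M)))} (hf : f.Finite)
    (hsub : f ⊆ basicSets (EdgeT Fw M)) (hmem : emptySeq (EdgeT Fw M) ∈ ⋂₀ f) :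
    ∃ C : Set (Set (SigmaZ (EdgeT Fw M))), C.Finite ∧
      (∀ c ∈ C, ∃ k w, c = cyl k w (∅ : Finset (EdgeT Fw M))) ∧
      ∀ z, (∀ c ∈ C, z ∉ c) → z ∈ ⋂₀ f := by
  revert hsub hmem
  refine Set.Finite.induction_on (motive := fun g _ => g ⊆ basicSets (EdgeT Fw M) →
    emptySeq (EdgeT Fw M) ∈ ⋂₀ g → ∃ C : Set (Set (SigmaZ (EdgeT Fw M))), C.Finite ∧
      (∀ c ∈ C, ∃ k w, c = cyl k w (∅ : Finset (EdgeT Fw M))) ∧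
      ∀ z, (∀ c ∈ C, z ∉ c) → z ∈ ⋂₀ g) f hf ?_ ?_
  · intro _ _
    exact ⟨∅, Set.finite_empty, by simp, by simp⟩
  · intro a fs ha hfs ih hsub hmem
    have hsub' : fs ⊆ basicSets (EdgeT Fw M) := fun s hs => hsub (Set.mem_insert_of_mem a hs)
    have hmem' : emptySeq (EdgeT Fw M) ∈ ⋂₀ fs := fun s hs =>
      hmem s (Set.mem_insert_of_mem a hs)
    obtain ⟨C, hCfin, hCc, hCsuf⟩ := ih hsub' hmem'
    have hamem : emptySeq (EdgeT Fw M) ∈ a := hmem a (Set.mem_insert a fs)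
    rcases hsub (Set.mem_insert a fs) with ⟨k, w, F, rfl⟩ | ⟨m, ks, ws, rfl⟩
    · exfalso
      have := hamem.1 k (le_refl k)
      simp [emptySeq] at this
    · refine ⟨C ∪ Set.range (fun j => cyl (ks j) (ws j) (∅ : Finset (EdgeT Fw M))),
        hCfin.union (Set.finite_range _), ?_, ?_⟩
      · rintro c (hc | ⟨j, rfl⟩)
        · exact hCc c hc
        · exact ⟨ks j, ws j, rfl⟩
      · intro z hz
        rintro s (rfl | hs)
        · simp only [Set.mem_compl_iff, Set.mem_iUnion, not_exists]
          intro j hj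
          exact hz _ (Set.mem_union_right _ ⟨j, rfl⟩) hj
        · exact hCsuf z (fun c hc => hz c (Set.mem_union_left _ hc)) s hs

theorem nbhd_partial {p : SigmaZ (EdgeT Fw M)} {L : ℤ} (hpL : ∀ i ≤ L, p.1 i ≠ none)
    (hpL2 : p.1 (L + 1) = none) {f : Set (Set (SigmaZ (EdgeT Fw M)))} (hf : f.Finite)
    (hsub : f ⊆ basicSets (EdgeT Fw M)) (hp : p ∈ ⋂₀ f) :
    ∃ Fb : Set (EdgeT Fw M), Fb.Finite ∧ ∀ z ∈ WkS Fw M, (∀ i ≤ L, z.1 i = p.1 i) →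
      (∀ e, z.1 (L + 1) = some e → e ∉ Fb) → z ∈ ⋂₀ f := by
  revert hsub hp
  refine Set.Finite.induction_on (motive := fun g _ => g ⊆ basicSets (EdgeT Fw M) → p ∈ ⋂₀ g →
    ∃ Fb : Set (EdgeT Fw M), Fb.Finite ∧ ∀ z ∈ WkS Fw M, (∀ i ≤ L, z.1 i = p.1 i) →
      (∀ e, z.1 (L + 1) = some e → e ∉ Fb) → z ∈ ⋂₀ g) f hf ?_ ?_
  · intro _ _
    exact ⟨∅, Set.finite_empty, by simp⟩
  · intro a fs ha hfs ih hsub hp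
    have hsub' : fs ⊆ basicSets (EdgeT Fw M) := fun s hs => hsub (Set.mem_insert_of_mem a hs)
    have hp' : p ∈ ⋂₀ fs := fun s hs => hp s (Set.mem_insert_of_mem a hs)
    obtain ⟨Fb, hFbfin, hFbsuf⟩ := ih hsub' hp'
    have hamem : p ∈ a := hp a (Set.mem_insert a fs)
    rcases hsub (Set.mem_insert a fs) with ⟨k, w, F, rfl⟩ | ⟨m, ks, ws, rfl⟩
    · -- cylinder case
      have hkL : k ≤ L := by
        by_contra hc
        push_neg at hc
        have h1 := hamem.1 k (le_refl k)
        rw [none_mono p hpL2 (by omega)] at h1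
        simp at h1
      refine ⟨Fb ∪ ↑F, hFbfin.union F.finite_toSet, ?_⟩
      intro z hzW hzag hznot
      rintro s (rfl | hs)
      · constructor
        · intro i hi
          rw [hzag i (le_trans hi hkL)]
          exact hamem.1 i hi
        · intro b hb heq
          rcases lt_or_eq_of_le hkL with hlt | rfl
          · rw [hzag (k + 1) (by omega)] at heq
            exact hamem.2 b hb heq
          · exact hznot b heq (Set.mem_union_right _ hb)
      · exact hFbsuf z hzW hzag
          (fun e he hemem => hznot e he (Set.mem_union_left _ hemem)) s hs
    · -- complement case
      refine ⟨Fb ∪ Set.range (fun j => ws j (L + 1)),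
        hFbfin.union (Set.finite_range _), ?_⟩
      intro z hzW hzag hznot
      rintro s (rfl | hs)
      · simp only [Set.mem_compl_iff, Set.mem_iUnion, not_exists]
        intro j hjmem
        by_cases hcase : ∃ i, i ≤ ks j ∧ i ≤ L ∧ p.1 i ≠ some (ws j i)
        · obtain ⟨i, hi1, hi2, hi3⟩ := hcase
          exact hi3 ((hzag i hi2) ▸ hjmem.1 i hi1)
        · push_neg at hcase
          have hkjL : L < ks j := by
            by_contra hc
            push_neg at hc
            have hpj : p ∈ cyl (ks j) (ws j) (∅ : Finset (EdgeT Fw M)) :=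
              ⟨fun i hi => hcase i hi (le_trans hi hc), by simp⟩
            have := hamem
            simp only [Set.mem_compl_iff, Set.mem_iUnion, not_exists] at this
            exact this j hpj
          have := hjmem.1 (L + 1) (by omega)
          exact hznot (ws j (L + 1)) this (Set.mem_union_right _ ⟨j, rfl⟩)
      · exact hFbsuf z hzW hzag
          (fun e he hemem => hznot e he (Set.mem_union_left _ hemem)) s hs

end Aux4


section Aux5

variable {A : Type u} (Fw : Set (List A)) (M : ℕ)

theorem mem_closure_Wk {x : SigmaZ A} (hx : x ∈ XF Fw (∅ : Set (ℕ → A))) :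
    hfunRaw Fw M x hx ∈ closure (WkS Fw M) := by
  rcases (mem_XF_iff Fw).mp hx with hX | ⟨hinf, hrest⟩
  · exact subset_closure (hfun_mem_Wk Fw M hX)
  rcases hrest with rfl | ⟨l, hl1, hl2, hl3⟩
  · rw [hfun_emptySeq Fw M hx, (basis_B (EdgeT Fw M)).mem_closure_iff]
    rintro o ⟨f, ⟨hffin, hfsub⟩, rfl⟩ ho
    obtain ⟨C, hCfin, hCc, hCsuf⟩ := collect_cyls Fw M hffin hfsub ho
    obtain ⟨z, hzW, hznot⟩ := exists_walk_avoiding Fw M (Wk_infinite Fw M hinf) hCfin hCc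
    exact ⟨z, hCsuf z hznot, hzW⟩
  · have hxlow : ∀ j ≤ l, x.1 j ≠ none := fun j hj => some_of_le x hl1 hj
    have hpL : ∀ i ≤ l - (M : ℤ), (hfunRaw Fw M x hx).1 i ≠ none := by
      intro i hi
      rw [hfun_ne_none_iff]
      intro t
      exact hxlow _ (by have := t.is_le; omega)
    have hpL2 : (hfunRaw Fw M x hx).1 (l - (M : ℤ) + 1) = none := by
      rw [hfunRaw_val]
      apply hfunAux_none
      intro hall
      apply hall ⟨M, by omega⟩
      rw [show l - (M : ℤ) + 1 + (((⟨M, by omega⟩ : Fin (M + 1)) : ℕ) : ℤ) = l + 1 by simp; ring]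
      exact hl2
    rw [(basis_B (EdgeT Fw M)).mem_closure_iff]
    rintro o ⟨f, ⟨hffin, hfsub⟩, rfl⟩ ho
    obtain ⟨Fb, hFbfin, hFbsuf⟩ := nbhd_partial Fw M hpL hpL2 hffin hfsub ho
    obtain ⟨a, haF, hanot⟩ := (hl3.diff (hFbfin.image (fun e : EdgeT Fw M => e.1 (Fin.last M)))).nonempty
    obtain ⟨z₀, hz₀X, hz₀l, hz₀ag⟩ := follower_elt Fw haF
    have hzW : hfunRaw Fw M z₀ (mem_XF_of_X Fw hz₀X) ∈ WkS Fw M := hfun_mem_Wk Fw M hz₀X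
    have hag : ∀ i ≤ l - (M : ℤ), (hfunRaw Fw M z₀ (mem_XF_of_X Fw hz₀X)).1 i =
        (hfunRaw Fw M x hx).1 i := by
      intro i hi
      refine hfun_congr Fw M (fun t => ?_)
      rw [hz₀ag (i + ((t : ℕ) : ℤ)) (by have := t.is_le; omega)]
    have hnot : ∀ e, (hfunRaw Fw M z₀ (mem_XF_of_X Fw hz₀X)).1 (l - (M : ℤ) + 1) = some e →
        e ∉ Fb := by
      intro e he hemem
      have hlet := hfun_letters Fw M he (Fin.last M)
      rw [show l - (M : ℤ) + 1 + (((Fin.last M : ℕ)) : ℤ) = l + 1 by simp; ring, hz₀l] at hlet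
      exact hanot ⟨e, hemem, (Option.some_injective _ hlet).symm⟩
    exact ⟨_, hFbsuf _ hzW hag hnot, hzW⟩

end Aux5


section Aux6

variable {A : Type u} (Fw : Set (List A)) (M : ℕ)

theorem hfun_surj (hF : ∀ w ∈ Fw, w.length = M + 1) {y : SigmaZ (EdgeT Fw M)}
    (hy : y ∈ closure (WkS Fw M)) :
    ∃ (x : SigmaZ A) (hx : x ∈ XF Fw (∅ : Set (ℕ → A))), hfunRaw Fw M x hx = y := by
  classical
  by_cases hall : ∀ i, y.1 i ≠ none
  · -- bi-infinite : y is a walk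
    have hyW : y ∈ WkS Fw M := by
      intro i
      set Yw : ℤ → EdgeT Fw M := fun j => (y.1 j).getD (getl y i (hall i)) with hYwdef
      have hYw : ∀ j, y.1 j = some (Yw j) := by
        intro j
        obtain ⟨e, he⟩ := Option.ne_none_iff_exists'.mp (hall j)
        rw [he, hYwdef]
        simp [he]
      obtain ⟨z, hzc, hzW⟩ := _root_.mem_closure_iff.mp hy _ (cyl_open (i + 1) Yw ∅)
        ⟨fun j _ => hYw j, by simp⟩
      obtain ⟨e, e', h1, h2, h3⟩ := hzW i
      refine ⟨e, e', ?_, ?_, h3⟩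
      · rw [hYw i, ← hzc.1 i (by omega)]
        exact h1
      · rw [hYw (i + 1), ← hzc.1 (i + 1) (le_refl _)]
        exact h2
    exact ⟨glueRaw Fw M y, mem_XF_of_X Fw (glue_mem_X Fw M hF hyW), hfun_glue Fw M hF hyW⟩
  · push_neg at hall
    obtain ⟨i₁, hi₁⟩ := hall
    by_cases hne : ∀ i, y.1 i = none
    · -- empty sequence
      have hyempty : y = emptySeq (EdgeT Fw M) := Subtype.ext (funext hne)
      subst hyempty
      have hWkinf : (WkS Fw M).Infinite := by
        by_contra hfin
        rw [Set.not_infinite] at hfin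
        rcases Set.eq_empty_or_nonempty (WkS Fw M) with hWe | ⟨z₀, hz₀⟩
        · rw [hWe, closure_empty] at hy
          exact absurd hy (Set.notMem_empty _)
        · obtain ⟨e₀, he₀⟩ : ∃ e, z₀.1 0 = some e := by
            obtain ⟨e, _, h1, _, _⟩ := hz₀ 0
            exact ⟨e, h1⟩
          obtain ⟨lst, hl⟩ : ∃ lst : List (SigmaZ (EdgeT Fw M)), ∀ z, z ∈ WkS Fw M ↔ z ∈ lst :=
            ⟨hfin.toFinset.toList, fun z => by simp⟩
          set O : Set (SigmaZ (EdgeT Fw M)) :=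
            (⋃ j : Fin lst.length, cyl 0 (fun i => ((lst.get j).1 i).getD e₀) ∅)ᶜ with hO
          have hOopen : IsOpen O := TopologicalSpace.GenerateOpen.basic _
            (Or.inr ⟨lst.length, fun _ => 0, fun j i => ((lst.get j).1 i).getD e₀, rfl⟩)
          have hyO : emptySeq (EdgeT Fw M) ∈ O := by
            rw [hO]
            simp only [Set.mem_compl_iff, Set.mem_iUnion, not_exists]
            intro j hj
            simpa [emptySeq] using hj.1 0 (le_refl 0)
          obtain ⟨z, hzO, hzW⟩ := _root_.mem_closure_iff.mp hy O hOopen hyO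
          obtain ⟨j, hj⟩ := List.mem_iff_get.mp ((hl z).mp hzW)
          apply hzO
          refine Set.mem_iUnion.mpr ⟨j, ⟨fun i _ => ?_, by simp⟩⟩
          rw [hj]
          obtain ⟨e, _, h1, _, _⟩ := hzW i
          simp [h1]
      have hXinf : (XFinf Fw (∅ : Set (ℕ → A))).Infinite := by
        refine Set.infinite_of_injOn_mapsTo (f := glueRaw Fw M) ?_
          (fun z hz => glue_mem_X Fw M hF hz) hWkinf
        intro z hz z' hz' h
        exact glue_injOn Fw M hz hz' h
      have hmem : emptySeq A ∈ XF Fw (∅ : Set (ℕ → A)) :=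
        (mem_XF_iff Fw).mpr (Or.inr ⟨hXinf, Or.inl rfl⟩)
      exact ⟨emptySeq A, hmem, hfun_emptySeq Fw M hmem⟩
    · -- partial sequence
      push_neg at hne
      obtain ⟨i₀, hi₀⟩ := hne
      obtain ⟨L, hL1, hL2⟩ := exists_end y hi₀ hi₁
      have hylow : ∀ j ≤ L, y.1 j ≠ none := fun j hj => some_of_le y hL1 hj
      set Yw : ℤ → EdgeT Fw M := fun j => (y.1 j).getD (getl y L hL1) with hYwdef
      have hYw : ∀ j ≤ L, y.1 j = some (Yw j) := by
        intro j hj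
        obtain ⟨e, he⟩ := Option.ne_none_iff_exists'.mp (hylow j hj)
        rw [he, hYwdef]
        simp [he]
      obtain ⟨z, hzc, hzW⟩ := _root_.mem_closure_iff.mp hy _ (cyl_open L Yw ∅)
        ⟨fun j hj => hYw j hj, by simp⟩
      have hgsome := glue_all_some Fw M hzW
      obtain ⟨xg, hxgval⟩ : ∃ xg : SigmaZ A,
          xg.1 = fun j => if j ≤ L + (M : ℤ) then (glueRaw Fw M z).1 j else none := by
        refine ⟨⟨fun j => if j ≤ L + (M : ℤ) then (glueRaw Fw M z).1 j else none, ?_⟩, rfl⟩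
        intro j hj
        dsimp only at hj ⊢
        by_cases hjL : j ≤ L + (M : ℤ)
        · rw [if_pos hjL] at hj
          exact absurd hj (hgsome j)
        · rw [if_neg (show ¬ j + 1 ≤ L + (M : ℤ) by omega)]
      have hxg_of_le : ∀ q ≤ L + (M : ℤ), xg.1 q = (glueRaw Fw M z).1 q := by
        intro q hq
        rw [hxgval]
        dsimp only
        rw [if_pos hq]
      have hxg_none : ∀ q, L + (M : ℤ) < q → xg.1 q = none := by
        intro q hq
        rw [hxgval]
        dsimp only
        rw [if_neg (by omega)]
      have hxg1 : xg.1 (L + (M : ℤ)) ≠ none := by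
        rw [hxg_of_le _ (le_refl _)]
        exact hgsome _
      have hxg2 : xg.1 (L + (M : ℤ) + 1) = none := hxg_none _ (by omega)
      have key : ∀ (z' : SigmaZ (EdgeT Fw M)), z' ∈ WkS Fw M →
          (∀ i ≤ L, z'.1 i = some (Yw i)) → ∀ q (t : Fin (M + 1)),
          ((t : ℕ) : ℤ) = q - min q L →
          (glueRaw Fw M z').1 q = some ((Yw (min q L)).1 t) := by
        intro z' hz'W hz'ag q t ht
        have h1 : z'.1 (min q L) = some (Yw (min q L)) := hz'ag _ (min_le_right _ _)
        have h2 := walk_letters Fw M hz'W (t : ℕ) t.isLt (min q L) _ h1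
        rw [show min q L + ((t : ℕ) : ℤ) = q by omega] at h2
        simpa using h2
      have hfol : (followerLetters (XFinf Fw (∅ : Set (ℕ → A))) xg (L + (M : ℤ))).Infinite := by
        by_contra hfin
        rw [Set.not_infinite] at hfin
        set V' : Set (EdgeT Fw M) := {e | ∃ z' ∈ WkS Fw M,
          (∀ i ≤ L, z'.1 i = some (Yw i)) ∧ z'.1 (L + 1) = some e} with hV'
        have hsrc : ∀ e ∈ V', esrc Fw M e = etgt Fw M (Yw L) := by
          rintro e ⟨z', hz'W, hz'ag, hz'e⟩
          obtain ⟨e₁, e₂, h1, h2, h3⟩ := hz'W L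
          rw [hz'ag L (le_refl L)] at h1
          rw [hz'e] at h2
          rw [← Option.some_injective _ h1, ← Option.some_injective _ h2] at h3
          exact h3.symm
        have hmapsto : ∀ e ∈ V',
            e.1 (Fin.last M) ∈ followerLetters (XFinf Fw (∅ : Set (ℕ → A))) xg (L + (M : ℤ)) := by
          rintro e ⟨z', hz'W, hz'ag, hz'e⟩
          refine ⟨glueRaw Fw M z', glue_mem_X Fw M hF hz'W, L + (M : ℤ) + 1, ?_, ?_⟩
          · have h2 := walk_letters Fw M hz'W M (by omega) (L + 1) e hz'e
            rwa [show L + 1 + (M : ℤ) = L + (M : ℤ) + 1 by ring] at h2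
          · intro i hi
            have hq : L + (M : ℤ) + 1 + i ≤ L + (M : ℤ) := by omega
            set q := L + (M : ℤ) + 1 + i with hqdef
            have htv : (((⟨(q - min q L).toNat, by omega⟩ : Fin (M + 1)) : ℕ) : ℤ) =
                q - min q L := by
              simp only [Fin.val_mk]
              omega
            rw [key z' hz'W hz'ag q _ htv, hxg_of_le q hq, key z hzW hzc.1 q _ htv]
        have himg : ((fun e : EdgeT Fw M => e.1 (Fin.last M)) '' V').Finite := by
          refine hfin.subset ?_
          rintro a ⟨e, he, rfl⟩
          exact hmapsto e he
        have hinj : Set.InjOn (fun e : EdgeT Fw M => e.1 (Fin.last M)) V' := by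
          intro e he e' he' hee
          apply Subtype.ext
          funext t
          refine Fin.lastCases ?_ ?_ t
          · exact hee
          · intro s
            have h1 := congrFun (congrArg Subtype.val (hsrc e he)) s
            have h2 := congrFun (congrArg Subtype.val (hsrc e' he')) s
            exact h1.trans h2.symm
        have hV'fin : V'.Finite := Set.Finite.of_finite_image himg hinj
        obtain ⟨z'', hz''c, hz''W⟩ := _root_.mem_closure_iff.mp hy _
          (cyl_open L Yw hV'fin.toFinset)
          ⟨fun j hj => hYw j hj, fun e _ heq => by
            rw [hL2] at heq
            simp at heq⟩
        obtain ⟨e'', he''⟩ : ∃ e, z''.1 (L + 1) = some e := by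
          obtain ⟨e1, e2, h1, h2, _⟩ := hz''W L
          exact ⟨e2, h2⟩
        have hV'mem : e'' ∈ V' := ⟨z'', hz''W, fun i hi => hz''c.1 i hi, he''⟩
        exact hz''c.2 e'' (hV'fin.mem_toFinset.mpr hV'mem) he''
      have hXinf := X_infinite_of_followers Fw hfol
      have hmem : xg ∈ XF Fw (∅ : Set (ℕ → A)) :=
        (mem_XF_iff Fw).mpr (Or.inr ⟨hXinf, Or.inr ⟨L + (M : ℤ), hxg1, hxg2, hfol⟩⟩)
      refine ⟨xg, hmem, ?_⟩
      apply Subtype.ext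
      funext i
      by_cases hiL : i ≤ L
      · have hcong : (hfunRaw Fw M xg hmem).1 i = (hfunRaw Fw M (glueRaw Fw M z)
            (mem_XF_of_X Fw (glue_mem_X Fw M hF hzW))).1 i := by
          refine hfun_congr Fw M (fun t => ?_)
          rw [hxg_of_le _ (by have := t.is_le; omega)]
        show (hfunRaw Fw M xg hmem).1 i = y.1 i
        rw [hcong, congrFun (congrArg Subtype.val (hfun_glue Fw M hF hzW)) i,
          hzc.1 i hiL, ← hYw i hiL]
      · show (hfunRaw Fw M xg hmem).1 i = y.1 i
        rw [none_mono y hL2 (by omega), hfunRaw_val]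
        apply hfunAux_none
        intro hall2
        apply hall2 ⟨M, by omega⟩
        show xg.1 (i + ((M : ℕ) : ℤ)) = none
        exact hxg_none _ (by omega)

end Aux6


section Aux7

variable {A : Type u} (Fw : Set (List A)) (M : ℕ)

theorem consChain {k : ℤ} {Wc : ℤ → EdgeT Fw M}
    (hcons : ∀ i ≤ k - 1, ∀ t : Fin M, (Wc i).1 t.succ = (Wc (i + 1)).1 t.castSucc) :
    ∀ (d : ℕ) (i : ℤ), i + (d : ℤ) ≤ k → ∀ (t s : Fin (M + 1)),
      ((t : ℕ) : ℤ) = (d : ℤ) + ((s : ℕ) : ℤ) → (Wc i).1 t = (Wc (i + (d : ℤ))).1 s := by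
  intro d
  induction d with
  | zero =>
    intro i hi t s hts
    have hts' : t = s := Fin.ext (by omega)
    rw [hts', show i + ((0 : ℕ) : ℤ) = i by simp]
  | succ d ih =>
    intro i hi t s hts
    have h1 := t.isLt
    have hsM : (s : ℕ) + d < M := by omega
    set u : Fin M := ⟨(s : ℕ) + d, hsM⟩ with hu
    have h2 : t = u.succ := Fin.ext (by simp only [Fin.val_succ, hu, Fin.val_mk]; omega)
    rw [h2, hcons i (by omega) u]
    have h3 := ih (i + 1) (by omega) u.castSucc s
      (by simp only [Fin.coe_castSucc, hu, Fin.val_mk]; omega)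
    rw [show i + ((d + 1 : ℕ) : ℤ) = i + 1 + (d : ℤ) by push_cast; ring]
    exact h3

theorem preimage_cyl (k : ℤ) (Wc : ℤ → EdgeT Fw M) (F : Finset (EdgeT Fw M)) :
    (∀ (x : SigmaZ A) (hx : x ∈ XF Fw (∅ : Set (ℕ → A))), hfunRaw Fw M x hx ∉ cyl k Wc F) ∨
    ∃ (w : ℤ → A) (F' : Finset A), (F = ∅ → F' = ∅) ∧
      ∀ (x : SigmaZ A) (hx : x ∈ XF Fw (∅ : Set (ℕ → A))),
        (hfunRaw Fw M x hx ∈ cyl k Wc F ↔ x ∈ cyl (k + (M : ℤ)) w F') := by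
  classical
  by_cases hcons : ∀ i ≤ k - 1, ∀ t : Fin M, (Wc i).1 t.succ = (Wc (i + 1)).1 t.castSucc
  · right
    set w : ℤ → A := fun j => (Wc (min j k)).1 ⟨min (j - min j k).toNat M, by omega⟩ with hw
    set F' : Finset A := (F.filter (fun e => ∀ t : Fin M,
        e.1 t.castSucc = w (k + 1 + ((t : ℕ) : ℤ)))).image (fun e => e.1 (Fin.last M)) with hF'
    refine ⟨w, F', by intro h; rw [hF', h]; simp, ?_⟩
    intro x hx
    have hwblk : ∀ i ≤ k, ∀ t : Fin (M + 1), w (i + ((t : ℕ) : ℤ)) = (Wc i).1 t := by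
      intro i hi t
      have htle := t.is_le
      have key := consChain Fw M hcons (min (i + ((t : ℕ) : ℤ)) k - i).toNat i
        (by omega) t
        ⟨min ((i + ((t : ℕ) : ℤ)) - min (i + ((t : ℕ) : ℤ)) k).toNat M, by omega⟩
        (by simp only [Fin.val_mk]; omega)
      have hidx : i + (((min (i + ((t : ℕ) : ℤ)) k - i).toNat : ℕ) : ℤ) =
          min (i + ((t : ℕ) : ℤ)) k := by omega
      rw [hidx] at key
      rw [hw]
      dsimp only
      exact key.symm
    constructor
    · rintro ⟨hblk, hFcond⟩
      have hxw : ∀ j ≤ k + (M : ℤ), x.1 j = some (w j) := by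
        intro j hj
        set i0 := min j k with hi0
        have hsome := hblk i0 (min_le_right _ _)
        set t0 : Fin (M + 1) := ⟨(j - i0).toNat, by omega⟩ with ht0
        have hlet := hfun_letters Fw M hsome t0
        rw [show i0 + ((t0 : ℕ) : ℤ) = j by simp only [ht0, Fin.val_mk]; omega] at hlet
        have hjw : w j = (Wc i0).1 t0 := by
          have hh := hwblk i0 (min_le_right _ _) t0
          rw [show i0 + ((t0 : ℕ) : ℤ) = j by simp only [ht0, Fin.val_mk]; omega] at hh
          exact hh
        rw [hlet, hjw]
      refine ⟨hxw, ?_⟩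
      intro a haF' heq
      obtain ⟨e, hemem, helast⟩ := Finset.mem_image.mp haF'
      have hefil := Finset.mem_filter.mp hemem
      have hcond : ∀ t : Fin (M + 1), x.1 (k + 1 + ((t : ℕ) : ℤ)) ≠ none := by
        intro t
        by_cases htM : (t : ℕ) < M
        · rw [hxw _ (by omega)]
          simp
        · have htM' : (t : ℕ) = M := by have := t.is_le; omega
          rw [show k + 1 + ((t : ℕ) : ℤ) = k + (M : ℤ) + 1 by omega, heq]
          simp
      apply hFcond e hefil.1
      rw [hfunRaw_val, hfunAux_some Fw M (hx := hx) hcond]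
      congr 1
      apply Subtype.ext
      funext t
      refine Fin.lastCases ?_ ?_ t
      · refine getl_eq x (hcond (Fin.last M)) ?_
        rw [show k + 1 + ((Fin.last M : ℕ) : ℤ) = k + (M : ℤ) + 1 by
          simp only [Fin.val_last]; ring, heq, helast]
      · intro s
        refine getl_eq x (hcond s.castSucc) ?_
        rw [show k + 1 + ((s.castSucc : ℕ) : ℤ) = k + 1 + ((s : ℕ) : ℤ) by simp]
        rw [hxw _ (by have := s.is_lt; omega), hefil.2 s]
    · rintro ⟨hxw, hFcond'⟩
      constructor
      · intro i hi
        have hcnd : ∀ t : Fin (M + 1), x.1 (i + ((t : ℕ) : ℤ)) ≠ none := by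
          intro t
          rw [hxw _ (by have := t.is_le; omega)]
          simp
        rw [hfunRaw_val, hfunAux_some Fw M (hx := hx) hcnd]
        congr 1
        apply Subtype.ext
        funext t
        refine getl_eq x (hcnd t) ?_
        rw [hxw _ (by have := t.is_le; omega), hwblk i hi t]
      · intro e heF hsome
        have hlast := hfun_letters Fw M hsome (Fin.last M)
        rw [show k + 1 + ((Fin.last M : ℕ) : ℤ) = k + (M : ℤ) + 1 by
          simp only [Fin.val_last]; ring] at hlast
        refine hFcond' (e.1 (Fin.last M)) ?_ hlast
        refine Finset.mem_image.mpr ⟨e, Finset.mem_filter.mpr ⟨heF, ?_⟩, rfl⟩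
        intro t
        have hcs := hfun_letters Fw M hsome t.castSucc
        rw [show k + 1 + ((t.castSucc : ℕ) : ℤ) = k + 1 + ((t : ℕ) : ℤ) by simp] at hcs
        rw [hxw (k + 1 + ((t : ℕ) : ℤ)) (by have := t.is_lt; omega)] at hcs
        exact (Option.some_injective _ hcs).symm
  · left
    intro x hx hmem
    push_neg at hcons
    obtain ⟨i, hik, t, ht⟩ := hcons
    have h1 := hmem.1 i (by omega)
    have h2 := hmem.1 (i + 1) (by omega)
    have l1 := hfun_letters Fw M h1 t.succ
    have l2 := hfun_letters Fw M h2 t.castSucc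
    rw [show i + 1 + ((t.castSucc : ℕ) : ℤ) = i + ((t.succ : ℕ) : ℤ) by
      simp [Fin.val_succ]; ring] at l2
    rw [l1] at l2
    exact ht (Option.some_injective _ l2)

theorem hfun_cont :
    Continuous (fun x : {x : SigmaZ A // x ∈ XF Fw (∅ : Set (ℕ → A))} =>
      hfunRaw Fw M x.1 x.2) := by
  have hcont : @Continuous _ _ _ (TopologicalSpace.generateFrom (basicSets (EdgeT Fw M)))
      (fun x : {x : SigmaZ A // x ∈ XF Fw (∅ : Set (ℕ → A))} => hfunRaw Fw M x.1 x.2) := by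
    rw [continuous_generateFrom_iff]
    rintro s (⟨k, Wc, F, rfl⟩ | ⟨n, ks, Ws, rfl⟩)
    · rcases preimage_cyl Fw M k Wc F with h | ⟨w, F', _, hiff⟩
      · convert isOpen_empty
        rw [Set.eq_empty_iff_forall_notMem]
        intro x hxmem
        exact h x.1 x.2 hxmem
      · have heq : (fun x : {x : SigmaZ A // x ∈ XF Fw (∅ : Set (ℕ → A))} =>
            hfunRaw Fw M x.1 x.2) ⁻¹' cyl k Wc F =
            Subtype.val ⁻¹' cyl (k + (M : ℤ)) w F' := by
          ext x
          exact hiff x.1 x.2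
        rw [heq]
        exact (cyl_open _ w F').preimage continuous_subtype_val
    · rw [Set.preimage_compl, Set.preimage_iUnion, Set.compl_iUnion]
      refine isOpen_iInter_of_finite (fun j => ?_)
      rcases preimage_cyl Fw M (ks j) (Ws j) ∅ with h | ⟨w, F', hF'e, hiff⟩
      · convert isOpen_univ
        rw [Set.eq_univ_iff_forall]
        intro x
        exact h x.1 x.2
      · have heq : ((fun x : {x : SigmaZ A // x ∈ XF Fw (∅ : Set (ℕ → A))} =>
            hfunRaw Fw M x.1 x.2) ⁻¹' cyl (ks j) (Ws j) ∅)ᶜ =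
            Subtype.val ⁻¹' (cyl (ks j + (M : ℤ)) w (∅ : Finset A))ᶜ := by
          rw [hF'e rfl] at hiff
          ext x
          simp only [Set.mem_compl_iff, Set.mem_preimage]
          exact not_congr (hiff x.1 x.2)
        rw [heq]
        exact (cyl_compl_open _ w).preimage continuous_subtype_val
  exact hcont

end Aux7


section Aux8

variable {A : Type u} (Fw : Set (List A)) (M : ℕ)

theorem image_cyl (k : ℤ) (w : ℤ → A) (F : Finset A) :
    (∀ (x : SigmaZ A), x ∈ XF Fw (∅ : Set (ℕ → A)) → x ∉ cyl k w F) ∨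
    ∃ (Wc : ℤ → EdgeT Fw M) (F_E : Finset (EdgeT Fw M)), (F = ∅ → F_E = ∅) ∧
      ∀ (x : SigmaZ A) (hx : x ∈ XF Fw (∅ : Set (ℕ → A))),
        (x ∈ cyl k w F ↔ hfunRaw Fw M x hx ∈ cyl (k - (M : ℤ)) Wc F_E) := by
  classical
  set extf : A → (Fin (M + 1) → A) :=
    fun a t => if (t : ℕ) < M then w (k - (M : ℤ) + 1 + ((t : ℕ) : ℤ)) else a with hext
  by_cases hocc : ∀ i ≤ k - (M : ℤ), OccB Fw M (fun t => w (i + ((t : ℕ) : ℤ)))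
  · right
    set Wc : ℤ → EdgeT Fw M := fun i => ⟨fun t => w (min i (k - (M : ℤ)) + ((t : ℕ) : ℤ)),
      hocc _ (min_le_right _ _)⟩ with hWc
    set F_E : Finset (EdgeT Fw M) := ((F.filter (fun a => OccB Fw M (extf a))).attach).image
      (fun a => (⟨extf a.1, by have h2 := Finset.mem_filter.mp a.2; exact h2.2⟩ : EdgeT Fw M)) with hFE
    refine ⟨Wc, F_E, by
      intro h; rw [hFE]; subst h
      exact Finset.eq_empty_of_forall_notMem (fun e he => by
        obtain ⟨a, _, _⟩ := Finset.mem_image.mp he; simpa using a.2), ?_⟩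
    intro x hx
    constructor
    · rintro ⟨hxw, hFcond⟩
      constructor
      · intro i hi
        have hcnd : ∀ t : Fin (M + 1), x.1 (i + ((t : ℕ) : ℤ)) ≠ none := by
          intro t
          rw [hxw _ (by have := t.is_le; omega)]
          simp
        rw [hfunRaw_val, hfunAux_some Fw M (hx := hx) hcnd]
        congr 1
        apply Subtype.ext
        funext t
        refine getl_eq x (hcnd t) ?_
        rw [hxw _ (by have := t.is_le; omega), hWc]
        dsimp only
        rw [show min i (k - (M : ℤ)) + ((t : ℕ) : ℤ) = i + ((t : ℕ) : ℤ) by omega]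
      · intro e heFE hsome
        obtain ⟨⟨a, hafil⟩, _, hea⟩ := Finset.mem_image.mp heFE
        have haF := (Finset.mem_filter.mp hafil).1
        have hlet := hfun_letters Fw M hsome (Fin.last M)
        rw [show k - (M : ℤ) + 1 + ((Fin.last M : ℕ) : ℤ) = k + 1 by
          simp only [Fin.val_last]; ring] at hlet
        have hval : e.1 (Fin.last M) = a := by
          rw [← hea]
          show extf a (Fin.last M) = a
          rw [hext]
          simp
        rw [hval] at hlet
        exact hFcond a haF hlet
    · rintro ⟨hblk, hFcondE⟩
      have hxw : ∀ j ≤ k, x.1 j = some (w j) := by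
        intro j hj
        set i0 := min j (k - (M : ℤ)) with hi0
        have hsome := hblk i0 (min_le_right _ _)
        set t0 : Fin (M + 1) := ⟨(j - i0).toNat, by omega⟩ with ht0
        have hlet := hfun_letters Fw M hsome t0
        rw [show i0 + ((t0 : ℕ) : ℤ) = j by simp only [ht0, Fin.val_mk]; omega] at hlet
        rw [hlet, hWc]
        dsimp only
        congr 2
        rw [show min i0 (k - (M : ℤ)) + ((t0 : ℕ) : ℤ) = j by
          simp only [ht0, Fin.val_mk]; omega]
      refine ⟨hxw, ?_⟩
      intro a haF heq
      have hcond : ∀ t : Fin (M + 1), x.1 (k - (M : ℤ) + 1 + ((t : ℕ) : ℤ)) ≠ none := by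
        intro t
        by_cases htM : (t : ℕ) < M
        · rw [hxw _ (by omega)]
          simp
        · have htM' : (t : ℕ) = M := by have := t.is_le; omega
          rw [show k - (M : ℤ) + 1 + ((t : ℕ) : ℤ) = k + 1 by omega, heq]
          simp
      have hsome := hfunAux_some Fw M (hx := hx) hcond
      have hbv : blockOf M x (k - (M : ℤ) + 1) hcond = extf a := by
        funext t
        refine Fin.lastCases ?_ ?_ t
        · refine getl_eq x (hcond (Fin.last M)) ?_
          rw [show k - (M : ℤ) + 1 + ((Fin.last M : ℕ) : ℤ) = k + 1 by
            simp only [Fin.val_last]; ring, heq]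
          congr 1
          rw [hext]
          simp
        · intro s1
          refine getl_eq x (hcond s1.castSucc) ?_
          rw [show k - (M : ℤ) + 1 + ((s1.castSucc : ℕ) : ℤ) =
            k - (M : ℤ) + 1 + ((s1 : ℕ) : ℤ) by simp]
          rw [hxw _ (by have := s1.is_lt; omega)]
          congr 1
          rw [hext]
          simp [s1.is_lt]
      have hOcc : OccB Fw M (extf a) := by
        rw [← hbv]
        exact occ_blockOf Fw M hx _ hcond
      have hmemF : a ∈ F.filter (fun a => OccB Fw M (extf a)) :=
        Finset.mem_filter.mpr ⟨haF, hOcc⟩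
      have heFE : (⟨extf a, hOcc⟩ : EdgeT Fw M) ∈ F_E := by
        rw [hFE]
        exact @Finset.mem_image_of_mem _ _ (fun _ _ => Classical.propDecidable _) _ _ _ (Finset.mem_attach _ ⟨a, hmemF⟩)
      refine hFcondE ⟨extf a, hOcc⟩ heFE ?_
      rw [hfunRaw_val, hsome]
      congr 1
      exact Subtype.ext hbv
  · left
    intro x hx hmem
    push_neg at hocc
    obtain ⟨i, hik, hnocc⟩ := hocc
    apply hnocc
    have hcnd : ∀ t : Fin (M + 1), x.1 (i + ((t : ℕ) : ℤ)) ≠ none := by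
      intro t
      rw [hmem.1 _ (by have := t.is_le; omega)]
      simp
    have hbv : blockOf M x i hcnd = fun t : Fin (M + 1) => w (i + ((t : ℕ) : ℤ)) := by
      funext t
      exact getl_eq x (hcnd t) (hmem.1 _ (by have := t.is_le; omega))
    rw [← hbv]
    exact occ_blockOf Fw M hx i hcnd

theorem image_of_basic
    (Fb : {x : SigmaZ A // x ∈ XF Fw (∅ : Set (ℕ → A))} →
      {y : SigmaZ (EdgeT Fw M) // y ∈ closure (WkS Fw M)})
    (hFb : ∀ x, (Fb x).1 = hfunRaw Fw M x.1 x.2) (hbij : Function.Bijective Fb)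
    {k : ℤ} {w : ℤ → A} {F : Finset A} {Wc : ℤ → EdgeT Fw M} {F_E : Finset (EdgeT Fw M)}
    (hiff : ∀ (x : SigmaZ A) (hx : x ∈ XF Fw (∅ : Set (ℕ → A))),
      (x ∈ cyl k w F ↔ hfunRaw Fw M x hx ∈ cyl (k - (M : ℤ)) Wc F_E)) :
    Fb '' (Subtype.val ⁻¹' cyl k w F) = Subtype.val ⁻¹' cyl (k - (M : ℤ)) Wc F_E := by
  ext y
  constructor
  · rintro ⟨x, hxmem, rfl⟩
    show (Fb x).1 ∈ cyl (k - (M : ℤ)) Wc F_E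
    rw [hFb x]
    exact (hiff x.1 x.2).mp hxmem
  · intro hy
    obtain ⟨x, rfl⟩ := hbij.2 y
    refine ⟨x, ?_, rfl⟩
    show x.1 ∈ cyl k w F
    apply (hiff x.1 x.2).mpr
    rw [← hFb x]
    exact hy

theorem hfun_openMap
    (Fb : {x : SigmaZ A // x ∈ XF Fw (∅ : Set (ℕ → A))} →
      {y : SigmaZ (EdgeT Fw M) // y ∈ closure (WkS Fw M)})
    (hFb : ∀ x, (Fb x).1 = hfunRaw Fw M x.1 x.2) (hbij : Function.Bijective Fb) :
    IsOpenMap Fb := by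
  intro U hU
  obtain ⟨V, hV, rfl⟩ := isOpen_induced_iff.mp hU
  have hV' : TopologicalSpace.GenerateOpen (basicSets A) V := hV
  clear hV hU
  induction hV' with
  | @basic s hs =>
    rcases hs with ⟨k, w2, F, rfl⟩ | ⟨n, ks, ws2, rfl⟩
    · rcases image_cyl Fw M k w2 F with h | ⟨Wc, F_E, _, hiff⟩
      · convert isOpen_empty
        rw [Set.eq_empty_iff_forall_notMem]
        rintro y ⟨x, hxmem, rfl⟩
        exact h x.1 x.2 hxmem
      · rw [image_of_basic Fw M Fb hFb hbij hiff]
        exact (cyl_open _ Wc F_E).preimage continuous_subtype_val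
    · have hpre : (Subtype.val ⁻¹' (⋃ j, cyl (ks j) (ws2 j) ∅)ᶜ :
          Set {x : SigmaZ A // x ∈ XF Fw (∅ : Set (ℕ → A))}) =
          (⋃ j, Subtype.val ⁻¹' cyl (ks j) (ws2 j) ∅)ᶜ := by
        rw [Set.preimage_compl, Set.preimage_iUnion]
      rw [hpre, Set.image_compl_eq hbij, Set.image_iUnion, Set.compl_iUnion]
      refine isOpen_iInter_of_finite (fun j => ?_)
      rcases image_cyl Fw M (ks j) (ws2 j) ∅ with h | ⟨Wc, F_E, hFEe, hiff⟩
      · convert isOpen_univ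
        rw [Set.eq_univ_iff_forall]
        intro y
        simp only [Set.mem_compl_iff]
        rintro ⟨x, hxmem, rfl⟩
        exact h x.1 x.2 hxmem
      · rw [image_of_basic Fw M Fb hFb hbij hiff, hFEe rfl, ← Set.preimage_compl]
        exact (cyl_compl_open _ Wc).preimage continuous_subtype_val
  | univ =>
    rw [Set.preimage_univ, Set.image_univ, hbij.2.range_eq]
    exact isOpen_univ
  | inter s t hs ht ihs iht =>
    rw [Set.preimage_inter, Set.image_inter hbij.1]
    exact ihs.inter iht
  | sUnion S hS ih =>
    rw [Set.preimage_sUnion]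
    simp only [Set.image_iUnion]
    exact isOpen_iUnion (fun s => isOpen_iUnion (fun hs => ih s hs))

end Aux8


/-- The edge shift of a directed graph, given by source and target maps: the closure
of the set of bi-infinite walks. -/
def edgeShift {E V : Type u} (src tgt : E → V) : Set (SigmaZ E) :=
  closure {x : SigmaZ E |
    ∀ i : ℤ, ∃ e e' : E, x.1 i = some e ∧ x.1 (i + 1) = some e' ∧ tgt e = src e'}

/-- Every `M`-step shift space (determined by forbidden words of length `M + 1`) is
topologically conjugate, via a shift-commuting homeomorphism, to the edge shift of a
directed graph with no sources and no sinks. -/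
theorem stmt18 {A : Type u} [Countable A] [Infinite A] (M : ℕ)
    (Gam : Set (SigmaZ A)) (Fw : Set (List A))
    (hF : ∀ w ∈ Fw, w.length = M + 1)
    (hGam : Gam = XF Fw (∅ : Set (ℕ → A))) :
    ∃ (E V : Type u) (src tgt : E → V),
      (∀ v : V, ∃ e : E, src e = v) ∧
      (∀ v : V, ∃ e : E, tgt e = v) ∧
      ∃ h : Gam ≃ₜ edgeShift src tgt,
        ∀ x y : Gam, (y : SigmaZ A) = shift (x : SigmaZ A) →
          (↑(h y) : SigmaZ E) = shift (↑(h x) : SigmaZ E) := by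
  subst hGam
  classical
  refine ⟨EdgeT Fw M, VertT Fw M, esrc Fw M, etgt Fw M, ?_, ?_, ?_⟩
  · rintro ⟨v, x, hxX, k, hk⟩
    have hcnd : ∀ t : Fin (M + 1), x.1 (k + ((t : ℕ) : ℤ)) ≠ none := fun t => hxX.1 _
    refine ⟨⟨blockOf M x k hcnd, ⟨x, hxX, k, fun t => getl_spec x _ (hcnd t)⟩⟩, ?_⟩
    apply Subtype.ext
    funext t
    refine getl_eq x (hcnd t.castSucc) ?_
    rw [show k + ((t.castSucc : ℕ) : ℤ) = k + ((t : ℕ) : ℤ) by simp]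
    exact hk t
  · rintro ⟨v, x, hxX, k, hk⟩
    have hcnd : ∀ t : Fin (M + 1), x.1 (k - 1 + ((t : ℕ) : ℤ)) ≠ none := fun t => hxX.1 _
    refine ⟨⟨blockOf M x (k - 1) hcnd, ⟨x, hxX, k - 1, fun t => getl_spec x _ (hcnd t)⟩⟩, ?_⟩
    apply Subtype.ext
    funext t
    refine getl_eq x (hcnd t.succ) ?_
    rw [show k - 1 + ((t.succ : ℕ) : ℤ) = k + ((t : ℕ) : ℤ) by simp only [Fin.val_succ]; omega]
    exact hk t
  · have hmemES : ∀ (x : SigmaZ A) (hx : x ∈ XF Fw (∅ : Set (ℕ → A))),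
        hfunRaw Fw M x hx ∈ edgeShift (esrc Fw M) (etgt Fw M) := fun x hx =>
      mem_closure_Wk Fw M hx
    set Fb : {x : SigmaZ A // x ∈ XF Fw (∅ : Set (ℕ → A))} →
        {y : SigmaZ (EdgeT Fw M) // y ∈ edgeShift (esrc Fw M) (etgt Fw M)} :=
      fun x => ⟨hfunRaw Fw M x.1 x.2, hmemES x.1 x.2⟩ with hFbdef
    have hFb : ∀ x, (Fb x).1 = hfunRaw Fw M x.1 x.2 := fun x => rfl
    have hbij : Function.Bijective Fb := by
      constructor
      · intro a b hab
        apply Subtype.ext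
        exact hfun_inj Fw M (congrArg Subtype.val hab)
      · intro y
        have hy : y.1 ∈ closure (WkS Fw M) := y.2
        obtain ⟨x, hx, heq⟩ := hfun_surj Fw M hF hy
        exact ⟨⟨x, hx⟩, Subtype.ext heq⟩
    have hcont : Continuous Fb := by
      rw [hFbdef]
      exact Continuous.subtype_mk (hfun_cont Fw M) _
    have hopen : IsOpenMap Fb := hfun_openMap Fw M Fb hFb hbij
    refine ⟨(Equiv.ofBijective Fb hbij).toHomeomorphOfContinuousOpen hcont hopen, ?_⟩
    intro x y hxy
    show (Fb y).1 = shift (Fb x).1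
    exact hfun_shift Fw M x.2 y.2 hxy


end SigmaZ
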